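/- Let N > 16 and S_N⁺, S_N⁻ as above, and define p(ξ, κ) = ((ξ₁ + ξ₂ − κ₁ − κ₂)/|ξ − κ|)·((κ₁ + κ₂)/|κ|). If ξ − κ ∈ S_N⁺ and κ ∈ S_N⁻, or ξ − κ ∈ S_N⁻ and κ ∈ S_N⁺, then −p(ξ, κ) ≥ 3/4. -/

import Mathlib

/-! Since `SNminus N = -SNplus N` and both factors of `pSym` are odd in their vector, the claim
reduces to a lower bound for `(v₁ + v₂) / |v|` on `SNplus N`. There `v₁ + v₂ ≥ N - 3/2` and
`|v|² ≤ 1 + (N + 1/2)²`, so the product of two such factors is at least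
`(N - 3/2)² / (1 + (N + 1/2)²)`, which exceeds `3/4` once `N > 16`. -/

noncomputable def nrm2 (ξ : ℝ × ℝ) : ℝ := Real.sqrt (ξ.1 ^ 2 + ξ.2 ^ 2)

def SNplus (N : ℝ) : Set (ℝ × ℝ) :=
  {κ | N - 1/2 ≤ κ.1 ∧ κ.1 ≤ N + 1/2 ∧ |κ.2| ≤ 1}

def SNminus (N : ℝ) : Set (ℝ × ℝ) :=
  {κ | -N - 1/2 ≤ κ.1 ∧ κ.1 ≤ -N + 1/2 ∧ |κ.2| ≤ 1}

noncomputable def pSym (ξ κ : ℝ × ℝ) : ℝ :=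
  ((ξ.1 + ξ.2 - κ.1 - κ.2) / nrm2 (ξ - κ)) * ((κ.1 + κ.2) / nrm2 κ)

lemma nrm2_neg (v : ℝ × ℝ) : nrm2 (-v) = nrm2 v := by
  simp [nrm2]

/-- `√2` times the cosine of the angle between `v` and the diagonal `(1, 1)`. -/
noncomputable def diagCos (v : ℝ × ℝ) : ℝ := (v.1 + v.2) / nrm2 v

lemma diagCos_neg (v : ℝ × ℝ) : diagCos (-v) = -diagCos v := by
  rw [diagCos, diagCos, nrm2_neg, Prod.fst_neg, Prod.snd_neg, ← neg_add, neg_div]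

lemma pSym_eq_diagCos_mul (ξ κ : ℝ × ℝ) : pSym ξ κ = diagCos (ξ - κ) * diagCos κ := by
  rw [pSym, diagCos, diagCos, Prod.fst_sub, Prod.snd_sub]
  ring

lemma neg_mem_SNplus_iff {N : ℝ} {v : ℝ × ℝ} : -v ∈ SNplus N ↔ v ∈ SNminus N := by
  simp only [SNplus, SNminus, Set.mem_ofPred_eq, Prod.fst_neg, Prod.snd_neg, abs_neg]
  constructor <;> rintro ⟨h₁, h₂, h₃⟩ <;> exact ⟨by linarith, by linarith, h₃⟩

lemma diagCos_ge_of_mem_SNplus {N : ℝ} (hN : 3/2 ≤ N) {v : ℝ × ℝ} (hv : v ∈ SNplus N) :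
    (N - 3/2) / √(1 + (N + 1/2) ^ 2) ≤ diagCos v := by
  obtain ⟨h₁, h₂, h₃⟩ := hv
  rw [abs_le] at h₃
  have hsum : N - 3/2 ≤ v.1 + v.2 := by linarith
  have hnrm_pos : 0 < nrm2 v := Real.sqrt_pos.2 (by nlinarith)
  have hnrm_le : nrm2 v ≤ √(1 + (N + 1/2) ^ 2) := Real.sqrt_le_sqrt (by nlinarith)
  exact div_le_div₀ (by linarith) hsum hnrm_pos hnrm_le

lemma three_quarters_le_diagCos_mul {N : ℝ} (hN : 16 < N) {v w : ℝ × ℝ}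
    (hv : v ∈ SNplus N) (hw : w ∈ SNplus N) : 3/4 ≤ diagCos v * diagCos w := by
  set c := (N - 3/2) / √(1 + (N + 1/2) ^ 2)
  have hc : 0 ≤ c := div_nonneg (by linarith) (Real.sqrt_nonneg _)
  have hcv : c ≤ diagCos v := diagCos_ge_of_mem_SNplus (by linarith) hv
  have hcw : c ≤ diagCos w := diagCos_ge_of_mem_SNplus (by linarith) hw
  calc (3/4 : ℝ) ≤ (N - 3/2) ^ 2 / (1 + (N + 1/2) ^ 2) := by
        rw [le_div_iff₀ (by positivity)]
        nlinarith
    _ = c * c := by rw [div_mul_div_comm, ← sq, Real.mul_self_sqrt (by positivity)]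
    _ ≤ diagCos v * diagCos w := mul_le_mul hcv hcw hc (hc.trans hcv)

theorem stmt_9 (N : ℝ) (hN : 16 < N) (ξ κ : ℝ × ℝ)
    (h : (ξ - κ ∈ SNplus N ∧ κ ∈ SNminus N) ∨ (ξ - κ ∈ SNminus N ∧ κ ∈ SNplus N)) :
    3/4 ≤ -pSym ξ κ := by
  rw [pSym_eq_diagCos_mul]
  rcases h with ⟨hplus, hminus⟩ | ⟨hminus, hplus⟩
  · have key := three_quarters_le_diagCos_mul hN hplus (neg_mem_SNplus_iff.2 hminus)
    rwa [diagCos_neg, mul_neg] at key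
  · have key := three_quarters_le_diagCos_mul hN hplus (neg_mem_SNplus_iff.2 hminus)
    rwa [diagCos_neg, mul_neg, mul_comm] at key
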